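/- (The proportional bandwidth allocation mechanism is conservatively (2 − √3, 1)-smooth for concave valuations.) Let C > 0, n ≥ 1, and for each player i let v_i : [0,∞) → ℝ be nonnegative, nondecreasing, and concave on [0, C] with v_i(0) = 0. Then for every feasible allocation x* ∈ [0,∞)^n with Σ_i x*_i ≤ C and every bid profile b ∈ [0,∞)^n, there exist Borel probability measures σ_1,…,σ_n on [0,∞) (σ_i may be taken uniform on an interval [0, λ·v_i(x*_i)] for a suitable constant λ > 0 independent of i, v, b) such that Σ_{i=1}^n ∫ u_i^{v_i}(b_{−i}; t) dσ_i(t) ≥ (2 − √3) · Σ_{i=1}^n v_i(x*_i) − Σ_{i=1}^n b_i. -/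

import Mathlib

open MeasureTheory

/-- Proportional bandwidth allocation: player `i` receives `b i · C / Σ_j b j` when the total
bid is positive, and `0` when all bids are zero. -/
noncomputable def bwAlloc {n : ℕ} (C : ℝ) (b : Fin (n + 1) → ℝ) (i : Fin (n + 1)) : ℝ :=
  if 0 < ∑ j, b j then b i * C / ∑ j, b j else 0

set_option maxHeartbeats 1000000

lemma chord_aux {C : ℝ} (hC : 0 < C) {v : ℝ → ℝ} (hv0 : v 0 = 0)
    (hconc : ConcaveOn ℝ (Set.Icc (0:ℝ) C) v) {a x : ℝ} (ha : 0 ≤ a) (hax : a ≤ x)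
    (hxC : x ≤ C) (hx : 0 < x) : a / x * v x ≤ v a := by
  have hmem0 : (0:ℝ) ∈ Set.Icc (0:ℝ) C := ⟨le_refl 0, hC.le⟩
  have hmemx : x ∈ Set.Icc (0:ℝ) C := ⟨hx.le, hxC⟩
  have h1 : (0:ℝ) ≤ 1 - a / x := by
    have : a / x ≤ 1 := (div_le_one hx).2 hax
    linarith
  have h2 : (0:ℝ) ≤ a / x := div_nonneg ha hx.le
  have h := hconc.2 hmem0 hmemx h1 h2 (by ring)
  have hxx : (1 - a/x) • (0:ℝ) + (a/x) • x = a := by rw [smul_zero, zero_add, smul_eq_mul, div_mul_cancel₀ a hx.ne']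
  rw [hxx] at h
  simp only [smul_eq_mul] at h
  rw [hv0] at h
  linarith

lemma key_aux (C : ℝ) (hC : 0 < C) (v : ℝ → ℝ) (hv0 : v 0 = 0)
    (hvnn : ∀ t ∈ Set.Icc (0:ℝ) C, 0 ≤ v t)
    (hmono : MonotoneOn v (Set.Icc (0:ℝ) C))
    (hconc : ConcaveOn ℝ (Set.Icc (0:ℝ) C) v)
    (xs : ℝ) (hxs : 0 ≤ xs) (hxsC : xs ≤ C)
    (Bmi bi : ℝ) (hbi : 0 ≤ bi) (hBmi : 0 ≤ Bmi) :
    ∃ t : ℝ, 0 ≤ t ∧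
      (2 - Real.sqrt 3) * v xs - (bi + Bmi) * xs / C ≤
        v (if 0 < t + Bmi then t * C / (t + Bmi) else 0) - t := by
  set V := v xs with hVdef
  set B := bi + Bmi with hBdef
  set β := B * xs / C with hβdef
  clear_value V B β
  have hB : 0 ≤ B := by rw [hBdef]; positivity
  have hβ : 0 ≤ β := by rw [hβdef]; positivity
  have hV : 0 ≤ V := by rw [hVdef]; exact hvnn xs ⟨hxs, hxsC⟩
  have hsqrt3 : Real.sqrt 3 ^ 2 = 3 := Real.sq_sqrt (by norm_num)
  have h13 : (1:ℝ) ≤ Real.sqrt 3 := by nlinarith [Real.sqrt_nonneg 3]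
  have h3le2 : Real.sqrt 3 ≤ 2 := by nlinarith [Real.sqrt_nonneg 3]
  by_cases hVβ : V ≤ β
  · -- deviate to 0
    refine ⟨0, le_refl 0, ?_⟩
    have : (if 0 < (0:ℝ) + Bmi then (0:ℝ) * C / (0 + Bmi) else 0) = 0 := by
      split <;> simp
    rw [this, hv0]
    nlinarith
  · push_neg at hVβ
    have hVpos : 0 < V := lt_of_le_of_lt hβ hVβ
    have hxspos : 0 < xs := by
      rcases hxs.lt_or_eq with h | h
      · exact h
      · exfalso; rw [← h] at hVdef; rw [hVdef, hv0] at hVpos; linarith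
    by_cases hβ0 : β = 0
    · -- B = 0, deviate to V/2
      have hB0 : B = 0 := by
        have h2 : B * xs / C = 0 := by rw [← hβdef]; exact hβ0
        rw [div_eq_zero_iff] at h2
        rcases h2 with h2 | h2
        · rcases mul_eq_zero.1 h2 with h | h
          · exact h
          · exact absurd h (ne_of_gt hxspos)
        · exact absurd h2 (ne_of_gt hC)
      have hBmi0 : Bmi = 0 := by rw [hBdef] at hB0; linarith
      refine ⟨V/2, by linarith, ?_⟩
      have hcond : 0 < V/2 + Bmi := by rw [hBmi0]; linarith
      rw [if_pos hcond]
      have halloc : V/2 * C / (V/2 + Bmi) = C := by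
        rw [hBmi0]; field_simp; ring
      rw [halloc]
      have hvC : V ≤ v C := by rw [hVdef]; exact hmono ⟨hxs, hxsC⟩ ⟨hC.le, le_refl C⟩ hxsC
      rw [hβ0]
      nlinarith
    · -- main case: 0 < β < V, deviate to √(Vβ) - β
      have hβpos : 0 < β := lt_of_le_of_ne hβ (Ne.symm hβ0)
      set s := Real.sqrt (V * β) with hsdef
      clear_value s
      have hs2 : s ^ 2 = V * β := by rw [hsdef]; exact Real.sq_sqrt (by positivity)
      have hspos : 0 < s := by rw [hsdef]; exact Real.sqrt_pos.2 (by positivity)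
      have hsβ : β < s := by nlinarith
      refine ⟨s - β, by linarith, ?_⟩
      have hcond : 0 < s - β + Bmi := by linarith
      rw [if_pos hcond]
      set t := s - β with htdef
      clear_value t
      have htpos : 0 < t := by rw [htdef]; linarith
      set A := t * C / (t + Bmi) with hAdef
      clear_value A
      have hAnn : 0 ≤ A := by rw [hAdef]; exact div_nonneg (mul_nonneg htpos.le hC.le) (by linarith)
      have hAC : A ≤ C := by
        rw [hAdef, div_le_iff₀ (by linarith)]
        nlinarith
      -- step 2: t/(t+β) ≤ A/xs  and t/(t+β) ≤ 1
      have hstep2 : t / (t + β) ≤ A / xs ∧ t / (t + β) ≤ 1 := by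
        constructor
        · rw [hAdef, div_div, div_le_div_iff₀ (by linarith) (by positivity)]
          have hCβ : C * β = B * xs := by rw [hβdef]; field_simp
          have hBmiB : Bmi ≤ B := by rw [hBdef]; linarith
          nlinarith [mul_nonneg (mul_nonneg htpos.le htpos.le) (sub_nonneg.2 hxsC),
            mul_nonneg (mul_nonneg htpos.le hxs) (sub_nonneg.2 hBmiB)]
        · rw [div_le_one (by linarith)]; linarith
      -- step 1: min(A/xs,1) * V ≤ v A
      have hstep1 : (t / (t + β)) * V ≤ v A := by
        by_cases hAxs : A ≤ xs
        · have hch := chord_aux hC hv0 hconc hAnn hAxs hxsC hxspos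
          rw [← hVdef] at hch
          have h2 : t / (t + β) * V ≤ A / xs * V :=
            mul_le_mul_of_nonneg_right hstep2.1 hV
          linarith
        · push_neg at hAxs
          have := hmono ⟨hxs, hxsC⟩ ⟨hAnn, hAC⟩ hAxs.le
          have h2 : t / (t + β) * V ≤ 1 * V :=
            mul_le_mul_of_nonneg_right hstep2.2 hV
          linarith
      -- step 3: (2-√3)V - β ≤ t/(t+β) * V - t
      have hR : 0 ≤ (Real.sqrt 3 - 1) * V + 2 * β := by nlinarith
      have hsq : (2 * s) ^ 2 ≤ ((Real.sqrt 3 - 1) * V + 2 * β) ^ 2 := by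
        nlinarith [mul_nonneg (show (0:ℝ) ≤ 4 - 2 * Real.sqrt 3 by linarith) (sq_nonneg (V - β)),
          mul_nonneg (show (0:ℝ) ≤ 2 * Real.sqrt 3 by linarith) (sq_nonneg β)]
      have hkey : 2 * s ≤ (Real.sqrt 3 - 1) * V + 2 * β := by nlinarith [hsq]
      have hstep3 : (2 - Real.sqrt 3) * V - β ≤ t / (t + β) * V - t := by
        have htβ : t + β = s := by rw [htdef]; ring
        have hexp : t / (t + β) * V - t = ((s - β) * V - s * (s - β)) / s := by
          rw [htβ, htdef]; field_simp
        rw [hexp, le_div_iff₀ hspos]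
        nlinarith [mul_nonneg hspos.le
          (show 0 ≤ (Real.sqrt 3 - 1) * V + 2 * β - 2 * s by linarith)]
      linarith

/-- the proportional bandwidth allocation mechanism is conservatively
`(2 − √3, 1)`-smooth for nonnegative, nondecreasing, concave valuations with `v i 0 = 0`:
for every feasible allocation `x*` and bid profile `b` there are randomized deviations
`σ i` (probability measures on `[0,∞)`) whose total deviation utility is at least
`(2 − √3)·Σ_i v_i(x*_i) − Σ_i b_i`. -/
theorem stmt_18 (C : ℝ) (hC : 0 < C) (n : ℕ) (v : Fin (n + 1) → ℝ → ℝ)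
    (hv0 : ∀ i, v i 0 = 0)
    (hvnn : ∀ i, ∀ t ∈ Set.Icc (0 : ℝ) C, 0 ≤ v i t)
    (hmono : ∀ i, MonotoneOn (v i) (Set.Icc (0 : ℝ) C))
    (hconc : ∀ i, ConcaveOn ℝ (Set.Icc (0 : ℝ) C) (v i))
    (xstar : Fin (n + 1) → ℝ) (hxnn : ∀ i, 0 ≤ xstar i) (hxfeas : ∑ i, xstar i ≤ C)
    (b : Fin (n + 1) → ℝ) (hb : ∀ i, 0 ≤ b i) :
    ∃ σ : Fin (n + 1) → Measure ℝ,
      (∀ i, IsProbabilityMeasure (σ i)) ∧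
      (∀ i, σ i (Set.Ici (0 : ℝ)) = 1) ∧
      (2 - Real.sqrt 3) * ∑ i, v i (xstar i) - ∑ i, b i ≤
        ∑ i, ∫ t, (v i (bwAlloc C (Function.update b i t) i) - t) ∂(σ i) := by
  classical
  set B := ∑ j, b j with hBdef
  have hBnn : 0 ≤ B := Finset.sum_nonneg fun j _ => hb j
  have hkey : ∀ i : Fin (n + 1), ∃ t : ℝ, 0 ≤ t ∧
      (2 - Real.sqrt 3) * v i (xstar i) - B * xstar i / C ≤
        v i (bwAlloc C (Function.update b i t) i) - t := by
    intro i
    have hxsC : xstar i ≤ C :=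
      le_trans (Finset.single_le_sum (f := xstar) (fun j _ => hxnn j) (Finset.mem_univ i)) hxfeas
    obtain ⟨t, ht0, hineq⟩ := key_aux C hC (v i) (hv0 i) (hvnn i) (hmono i) (hconc i)
      (xstar i) (hxnn i) hxsC (∑ j ∈ Finset.univ \ {i}, b j) (b i)
      (hb i) (Finset.sum_nonneg fun j _ => hb j)
    refine ⟨t, ht0, ?_⟩
    have hsum : ∑ j, Function.update b i t j = t + ∑ j ∈ Finset.univ \ {i}, b j :=
      Finset.sum_update_of_mem (Finset.mem_univ i) b t
    have hBsplit : B = b i + ∑ j ∈ Finset.univ \ {i}, b j := by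
      rw [hBdef]
      have h := Finset.sum_update_of_mem (f := b) (b := b i) (s := Finset.univ) (Finset.mem_univ i)
      rw [Function.update_eq_self] at h
      exact h
    have halloc : bwAlloc C (Function.update b i t) i =
        (if 0 < t + ∑ j ∈ Finset.univ \ {i}, b j
          then t * C / (t + ∑ j ∈ Finset.univ \ {i}, b j) else 0) := by
      unfold bwAlloc
      rw [hsum, Function.update_self]
    rw [halloc, hBsplit]
    exact hineq
  choose t ht0 htineq using hkey
  refine ⟨fun i => Measure.dirac (t i), fun i => inferInstance, fun i =>
    Measure.dirac_apply_of_mem (ht0 i), ?_⟩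
  have hint : ∀ i, ∫ s, (v i (bwAlloc C (Function.update b i s) i) - s) ∂(Measure.dirac (t i))
      = v i (bwAlloc C (Function.update b i (t i)) i) - t i :=
    fun i => integral_dirac _ (t i)
  calc (2 - Real.sqrt 3) * ∑ i, v i (xstar i) - ∑ i, b i
      ≤ ∑ i, ((2 - Real.sqrt 3) * v i (xstar i) - B * xstar i / C) := by
        rw [Finset.sum_sub_distrib, ← Finset.mul_sum]
        have h1 : ∑ i, B * xstar i / C = B * (∑ i, xstar i) / C := by
          rw [← Finset.sum_div, ← Finset.mul_sum]
        rw [h1]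
        have h2 : B * (∑ i, xstar i) / C ≤ B := by
          rw [div_le_iff₀ hC]
          nlinarith
        rw [← hBdef]
        linarith
    _ ≤ ∑ i, (v i (bwAlloc C (Function.update b i (t i)) i) - t i) :=
        Finset.sum_le_sum fun i _ => htineq i
    _ = ∑ i, ∫ s, (v i (bwAlloc C (Function.update b i s) i) - s) ∂(Measure.dirac (t i)) := by
        exact Finset.sum_congr rfl fun i _ => (hint i).symm
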